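/- arXiv:2312.14521 — 2 statements merged into one kernel-verified Lean document; each statement's English description precedes it below -/
import Mathlib

section
/- For the depolarizing channel E(ρ) = pI/D + (1-p)ρ on a D-dimensional space with p ∈ (0,1), and any measurement operator 0 ≤ M ≤ I and density matrices ρ, σ with trace distance at most d, we have Tr(M·E(ρ)) ≤ (1 + ((1-p)/p)·d·D) · Tr(M·E(σ)). -/
/-!
Since `Tr (ρ - σ) = 0`, every eigenvalue of the Hermitian matrix `ρ - σ` is at most half of
`∑ |λᵢ|`, hence at most `d`; so `ρ - σ ≤ d • 1` and `Tr (M ρ) ≤ Tr (M σ) + d Tr M` for `M ≥ 0`.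
The depolarizing noise adds `(p / D) Tr M` to both sides, and scaling by `1 + (1 - p) d D / p`
turns this term into `(1 - p) d Tr M`, which absorbs the excess of `Tr (M ρ)` over `Tr (M σ)`.
-/

open Matrix ComplexOrder

lemma Finset.le_half_sum_abs_of_sum_eq_zero {ι : Type*} {s : Finset ι} {f : ι → ℝ}
    (hf : ∑ i ∈ s, f i = 0) {i : ι} (hi : i ∈ s) : f i ≤ (1 / 2) * ∑ j ∈ s, |f j| := by
  have hpos : f i ≤ ∑ j ∈ s, (f j + |f j|) / 2 := by
    refine (?_ : f i ≤ (f i + |f i|) / 2).trans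
      (single_le_sum (fun j _ => ?_) hi (f := fun j => (f j + |f j|) / 2))
    · linarith [le_abs_self (f i)]
    · linarith [neg_abs_le (f j)]
  rwa [← sum_div, sum_add_distrib, hf, zero_add, div_eq_inv_mul, ← one_div] at hpos

section
open scoped MatrixOrder

variable {n 𝕜 : Type*} [Fintype n] [RCLike 𝕜]

lemma Matrix.PosSemidef.trace_mul_nonneg {A B : Matrix n n 𝕜} (hA : A.PosSemidef)
    (hB : B.PosSemidef) : 0 ≤ (A * B).trace := by
  classical
  obtain ⟨C, rfl⟩ := CStarAlgebra.nonneg_iff_eq_star_mul_self.mp hA.nonneg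
  rw [mul_assoc, trace_mul_comm, mul_assoc, ← mul_assoc, star_eq_conjTranspose]
  exact (hB.mul_mul_conjTranspose_same C).trace_nonneg

lemma Matrix.PosSemidef.trace_mul_le_trace_mul {M A B : Matrix n n 𝕜} (hM : M.PosSemidef)
    (hAB : (B - A).PosSemidef) : (M * A).trace ≤ (M * B).trace := by
  simpa [mul_sub, trace_sub] using hM.trace_mul_nonneg hAB

lemma Matrix.IsHermitian.posSemidef_smul_one_sub [DecidableEq n] {A : Matrix n n 𝕜}
    (hA : A.IsHermitian) {c : ℝ} (hc : ∀ i, hA.eigenvalues i ≤ c) :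
    ((c : 𝕜) • 1 - A).PosSemidef := by
  have : A ≤ algebraMap ℝ (Matrix n n 𝕜) c :=
    le_algebraMap_of_spectrum_le (by simpa [hA.spectrum_real_eq_range_eigenvalues] using hc)
  rwa [Algebra.algebraMap_eq_smul_one, le_iff, RCLike.real_smul_eq_coe_smul (K := 𝕜)] at this

end

lemma Matrix.re_trace_mul_smul_one_add_smul {n : Type*} [Fintype n] [DecidableEq n]
    (M X : Matrix n n ℂ) (a b : ℝ) :
    (M * ((a : ℂ) • 1 + (b : ℂ) • X)).trace.re = a * M.trace.re + b * (M * X).trace.re := by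
  simp only [mul_add, Matrix.mul_smul, mul_one, trace_add, trace_smul, smul_eq_mul,
    Complex.add_re, Complex.re_ofReal_mul]

theorem stmt_15_general (D : ℕ) (hD : 0 < D) (p d : ℝ) (hp : p ∈ Set.Ioo (0:ℝ) 1) (hd : 0 < d)
    (ρ σ M : Matrix (Fin D) (Fin D) ℂ)
    (hσ : σ.PosSemidef)
    (hρtr : ρ.trace = 1) (hσtr : σ.trace = 1)
    (hH : (ρ - σ).IsHermitian)
    (htd : (1/2) * ∑ i, |hH.eigenvalues i| ≤ d)
    (hM : M.PosSemidef) :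
    (M * ((p / D : ℂ) • (1 : Matrix (Fin D) (Fin D) ℂ) + ((1 - p : ℝ) : ℂ) • ρ)).trace.re ≤
      (1 + ((1 - p) / p) * d * D) *
        (M * ((p / D : ℂ) • (1 : Matrix (Fin D) (Fin D) ℂ) + ((1 - p : ℝ) : ℂ) • σ)).trace.re := by
  obtain ⟨hp0, hp1⟩ := hp
  have hsum : ∑ i, hH.eigenvalues i = 0 := by
    have h := hH.trace_eq_sum_eigenvalues
    rw [trace_sub, hρtr, hσtr, sub_self] at h
    exact RCLike.ofReal_eq_zero.mp ((RCLike.ofReal_sum _ _).trans h.symm)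
  have hgap : ((d : ℂ) • 1 - (ρ - σ)).PosSemidef := hH.posSemidef_smul_one_sub fun i =>
    (Finset.le_half_sum_abs_of_sum_eq_zero hsum (Finset.mem_univ i)).trans htd
  have hρσ : (M * ρ).trace.re ≤ (M * σ).trace.re + d * M.trace.re := by
    have h := (Complex.le_def.mp (hM.trace_mul_le_trace_mul hgap)).1
    simp only [mul_sub, trace_sub, Matrix.mul_smul, mul_one, trace_smul, smul_eq_mul,
      Complex.sub_re, Complex.re_ofReal_mul] at h
    linarith
  have hσ0 : 0 ≤ (M * σ).trace.re := (Complex.le_def.mp (hM.trace_mul_nonneg hσ)).1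
  have hcast : (p / D : ℂ) = ((p / D : ℝ) : ℂ) := by push_cast; rfl
  rw [hcast, re_trace_mul_smul_one_add_smul, re_trace_mul_smul_one_add_smul]
  have hD' : (D : ℝ) ≠ 0 := by positivity
  have hc : (1 - p) / p * d * D * (p / D) = (1 - p) * d := by field_simp
  have h1p : 0 ≤ 1 - p := by linarith
  nlinarith [mul_le_mul_of_nonneg_left hρσ h1p, congrArg (· * M.trace.re) hc,
    mul_nonneg (mul_nonneg (mul_nonneg (div_nonneg h1p hp0.le) hd.le) (Nat.cast_nonneg D)) hσ0]

theorem stmt_15 (D : ℕ) (hD : 0 < D) (p d : ℝ) (hp : p ∈ Set.Ioo (0:ℝ) 1) (hd : 0 < d)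
    (ρ σ M : Matrix (Fin D) (Fin D) ℂ)
    (hρ : ρ.PosSemidef) (hσ : σ.PosSemidef)
    (hρtr : ρ.trace = 1) (hσtr : σ.trace = 1)
    (hH : (ρ - σ).IsHermitian)
    (htd : (1/2) * ∑ i, |hH.eigenvalues i| ≤ d)
    (hM : M.PosSemidef) (hMI : ((1 : Matrix (Fin D) (Fin D) ℂ) - M).PosSemidef) :
    (M * ((p / D : ℂ) • (1 : Matrix (Fin D) (Fin D) ℂ) + ((1 - p : ℝ) : ℂ) • ρ)).trace.re ≤
      (1 + ((1 - p) / p) * d * D) *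
        (M * ((p / D : ℂ) • (1 : Matrix (Fin D) (Fin D) ℂ) + ((1 - p : ℝ) : ℂ) • σ)).trace.re :=
  stmt_15_general D hD p d hp hd ρ σ M hσ hρtr hσtr hH htd hM
end

section
/- Let p ∈ (0, 0.05], p' = 1 - (1-p)^7 - 7p(1-p)^6, and p₅' = 1 - (1-p')^7 - 7p'(1-p')^6. Then for any d > 0, D > 0: ln(1 + ((1-p₅')/p₅')dD) > ln(1 + ((1-p')/p')dD) > ln(1 + ((1-p)/p)dD); i.e., each additional level of Steane concatenation strictly increases the privacy budget. -/
/-!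
One level of Steane encoding maps the error rate `q` to the probability `p'(q)` that at least two of
seven qubits fail. This is `q ^ 2` times a positive polynomial, so `0 < p'(q)`, and for `q ≤ 1/20` it
is below `q`; hence both levels strictly lower the error rate. The budget `ε` is strictly decreasing
on `(0, 1]`, since `q ↦ (1 - q) / q` is and `log` is increasing.
-/

namespace Steane

def logicalError (q : ℝ) : ℝ := 1 - (1 - q) ^ 7 - 7 * q * (1 - q) ^ 6

theorem logicalError_eq (q : ℝ) :
    logicalError q = q ^ 2 * (21 * (1 - q) ^ 5 + 35 * q * (1 - q) ^ 4 + 35 * q ^ 2 * (1 - q) ^ 3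
      + 21 * q ^ 3 * (1 - q) ^ 2 + 7 * q ^ 4 * (1 - q) + q ^ 5) := by
  unfold logicalError; ring

theorem logicalError_pos {q : ℝ} (h0 : 0 < q) (h1 : q < 1) : 0 < logicalError q := by
  have : 0 < 1 - q := by linarith
  rw [logicalError_eq]; positivity

theorem logicalError_lt_self {q : ℝ} (h0 : 0 < q) (h1 : q ≤ 1 / 20) : logicalError q < q := by
  have hexpand : logicalError q =
      q * (q * (21 - 70 * q + 105 * q ^ 2 - 84 * q ^ 3 + 35 * q ^ 4 - 6 * q ^ 5)) := by
    unfold logicalError; ring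
  have hsmall : q * (21 - 70 * q + 105 * q ^ 2 - 84 * q ^ 3 + 35 * q ^ 4 - 6 * q ^ 5) < 1 := by
    nlinarith [pow_pos h0 2, pow_pos h0 3, pow_pos h0 4, pow_pos h0 5]
  rw [hexpand]; nlinarith

end Steane

theorem Real.log_one_add_div_mul_lt_of_lt {q q' c : ℝ} (hq' : 0 < q') (hlt : q' < q) (hq : q ≤ 1)
    (hc : 0 < c) : Real.log (1 + (1 - q) / q * c) < Real.log (1 + (1 - q') / q' * c) := by
  have hq0 : 0 < q := hq'.trans hlt
  have hdecr : (1 - q) / q < (1 - q') / q' := by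
    rw [div_lt_div_iff₀ hq0 hq']
    nlinarith
  apply Real.log_lt_log
  · have : 0 ≤ (1 - q) / q := div_nonneg (by linarith) hq0.le
    positivity
  · gcongr

theorem stmt_18 (p p' p₅' d D : ℝ) (hp : 0 < p) (hp05 : p ≤ 0.05)
    (hp' : p' = 1 - (1 - p)^7 - 7 * p * (1 - p)^6)
    (hp₅' : p₅' = 1 - (1 - p')^7 - 7 * p' * (1 - p')^6)
    (hd : 0 < d) (hD : 0 < D) :
    Real.log (1 + ((1 - p₅') / p₅') * d * D) > Real.log (1 + ((1 - p') / p') * d * D) ∧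
    Real.log (1 + ((1 - p') / p') * d * D) > Real.log (1 + ((1 - p) / p) * d * D) := by
  have hp20 : p ≤ 1 / 20 := by norm_num at hp05 ⊢; exact hp05
  have hp'_pos : 0 < p' := hp' ▸ Steane.logicalError_pos hp (by linarith)
  have hp'_lt : p' < p := hp' ▸ Steane.logicalError_lt_self hp hp20
  have hp₅'_pos : 0 < p₅' := hp₅' ▸ Steane.logicalError_pos hp'_pos (by linarith)
  have hp₅'_lt : p₅' < p' := hp₅' ▸ Steane.logicalError_lt_self hp'_pos (by linarith)
  simp only [mul_assoc]
  exact ⟨Real.log_one_add_div_mul_lt_of_lt hp₅'_pos hp₅'_lt (by linarith) (mul_pos hd hD),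
    Real.log_one_add_div_mul_lt_of_lt hp'_pos hp'_lt (by linarith) (mul_pos hd hD)⟩
end
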